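/- Let Au ∈ M_{nu}(ℂ) have all eigenvalues λ with Re λ > 0, let As ∈ M_{ns}(ℂ) have all eigenvalues μ with Re μ ≤ 0, and let Aus (nu×ns), Bu (nu×p), Bs (ns×p), Cu (q×nu), Cs (q×ns), D (q×p) be complex matrices. Over K = RatFunc ℂ set T := [Cu Cs] · (s·I − fromBlocks(Au, Aus, 0, As))⁻¹ · [Bu; Bs] + D. Suppose X ∈ M_{nu}(ℂ) is an invertible Hermitian solution of the Lyapunov equation Auᴴ X + X Au − Cuᴴ Cu = 0, and set M := −X⁻¹ Cuᴴ. Let P ∈ M_q(ℂ) be unitary and define over K: T_D := P·Cu·(s·I − Au − M·Cu)⁻¹·M + P and T_N := P·[Cu Cs]·(s·I − fromBlocks(Au + M·Cu, Aus + M·Cs, 0, As))⁻¹·[Bu + M·D; Bs] + P·D. Then: T_D is inner with respect to the imaginary axis, i.e. T_D · T_D⋆ = 1; every pole α of T_D satisfies Re α < 0; every pole α of T_N satisfies Re α ≤ 0; and T_D · T = T_N, so that T = T_D⁻¹ · T_N. (Corollary 5.1 of the paper: continuous-time left-coprime factorization with an inner denominator.) -/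

import Mathlib

open Matrix

set_option synthInstance.maxHeartbeats 1000000
set_option maxHeartbeats 1000000

noncomputable section

abbrev K : Type := RatFunc ℂ

/-- `α` is a pole of `q`: a root of the denominator of `q` in lowest terms. -/
def IsPole (α : ℂ) (q : K) : Prop := Polynomial.eval α (RatFunc.denom q) = 0

/-- `α` is a pole of a matrix if it is a pole of some entry. -/
def MIsPole {I J : Type} (α : ℂ) (W : Matrix I J K) : Prop := ∃ i j, IsPole α (W i j)

/-- `W⋆`: the transpose of the entrywise application of `σc`. -/
def paraStar {I J : Type} (σc : K →+* K) (W : Matrix I J K) : Matrix J I K := (W.map σc)ᵀ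

/-- A complex matrix viewed as a matrix of rational functions. -/
def toK {I J : Type} (A : Matrix I J ℂ) : Matrix I J K :=
  A.map (fun c : ℂ => (RatFunc.C c : K))

/-- The matrix `s·I` over `K`. -/
def sI (n : Type) [Fintype n] [DecidableEq n] : Matrix n n K :=
  (RatFunc.X : K) • (1 : Matrix n n K)

/-!
The closed-loop matrix `F = Au + M Cu` equals `-X⁻¹ Auᴴ X`, so its eigenvalues are the
reflections `-conj λ` of those of `Au` and lie in the open left half-plane. Every pole of a
realization `C (s - A)⁻¹ B + D` is an eigenvalue of `A`, which locates the poles of `T_D` (state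
matrix `F`) and of `T_N` (block upper triangular with diagonal blocks `F` and `As`).

With `Y = X⁻¹`, the Lyapunov equation reads `Au Y + Y Auᴴ = M Mᴴ` and `Y Cuᴴ = -M`; these are
the all-pass conditions for `Cu (s - F)⁻¹ M + 1`, so `T_D` is inner.

Finally `T_D T = T_N` is output injection through `E = [M; 0]`: for any realization,
`(C (s - A - E C)⁻¹ E + 1) (C (s - A)⁻¹ B + D) = C (s - A - E C)⁻¹ (B + E D) + D`, and by block
triangularity the first factor is `Cu (s - F)⁻¹ M + 1`.
-/

open Polynomial

namespace Matrix

section feedback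

variable {R : Type*} [CommRing R] {l m n : Type*} [Fintype m] [Fintype n] [DecidableEq n]

lemma inv_sub_mul_mul_mul_inv {S : Matrix n n R} (E : Matrix n m R) (C : Matrix m n R)
    (hS : IsUnit S.det) (hSEC : IsUnit (S - E * C).det) :
    (S - E * C)⁻¹ * E * C * S⁻¹ = (S - E * C)⁻¹ - S⁻¹ :=
  calc (S - E * C)⁻¹ * E * C * S⁻¹ = (S - E * C)⁻¹ * (S - (S - E * C)) * S⁻¹ := by
        rw [sub_sub_cancel, Matrix.mul_assoc _ E C]
    _ = (S - E * C)⁻¹ - S⁻¹ := by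
        rw [Matrix.mul_sub, Matrix.sub_mul, Matrix.mul_assoc, mul_nonsing_inv _ hS,
          nonsing_inv_mul _ hSEC, Matrix.mul_one, Matrix.one_mul]

lemma mul_inv_sub_mul_mul_add_one_mul [DecidableEq m] {S : Matrix n n R} (E : Matrix n m R)
    (C : Matrix m n R) (B : Matrix n l R) (D : Matrix m l R) (hS : IsUnit S.det)
    (hSEC : IsUnit (S - E * C).det) :
    (C * (S - E * C)⁻¹ * E + 1) * (C * S⁻¹ * B + D) = C * (S - E * C)⁻¹ * (B + E * D) + D :=
  calc (C * (S - E * C)⁻¹ * E + 1) * (C * S⁻¹ * B + D)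
      = C * S⁻¹ * B + D + C * ((S - E * C)⁻¹ * E * C * S⁻¹) * B
        + C * (S - E * C)⁻¹ * (E * D) := by
        simp only [Matrix.add_mul, Matrix.mul_add, Matrix.one_mul, Matrix.mul_assoc]
        abel
    _ = C * (S - E * C)⁻¹ * (B + E * D) + D := by
        rw [inv_sub_mul_mul_mul_inv E C hS hSEC]
        simp only [Matrix.mul_sub, Matrix.sub_mul, Matrix.mul_add, Matrix.mul_assoc]
        abel

-- The ascription on `0` keeps elaboration from picking the `CStarMatrix` product instance.
lemma fromCols_mul_inv_fromBlocks_zero₂₁_mul_fromRows_zero [DecidableEq m]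
    (C₁ : Matrix l m R) (C₂ : Matrix l n R) (S₁₁ : Matrix m m R) (S₁₂ : Matrix m n R)
    (S₂₂ : Matrix n n R) {k : Type*} (E : Matrix m k R) (h : IsUnit S₁₁ ↔ IsUnit S₂₂) :
    fromCols C₁ C₂ * (fromBlocks S₁₁ S₁₂ 0 S₂₂)⁻¹ * fromRows E (0 : Matrix n k R) =
      C₁ * S₁₁⁻¹ * E := by
  rw [inv_fromBlocks_zero₂₁_of_isUnit_iff _ _ _ h]
  simp [Matrix.mul_assoc, fromBlocks_mul_fromRows, fromCols_mul_fromRows]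

end feedback

lemma isRoot_charpoly_neg_iff {R n : Type*} [CommRing R] [Fintype n] [DecidableEq n]
    (A : Matrix n n R) (β : R) : (-A).charpoly.IsRoot β ↔ A.charpoly.IsRoot (-β) := by
  rw [IsRoot, IsRoot, eval_charpoly, eval_charpoly,
    show scalar n β - -A = -(scalar n (-β) - A) by simp [sub_eq_add_neg, add_comm], det_neg]
  exact ((isUnit_neg_one (α := R)).pow _).mul_right_eq_zero

section complex

variable {n m : Type} [Fintype n] [DecidableEq n] [Fintype m] {A X : Matrix n n ℂ}
  {C : Matrix m n ℂ}

lemma isRoot_charpoly_conjTranspose_iff (A : Matrix n n ℂ) (β : ℂ) :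
    Aᴴ.charpoly.IsRoot β ↔ A.charpoly.IsRoot (star β) := by
  rw [IsRoot, IsRoot, eval_charpoly, eval_charpoly,
    show scalar n β - Aᴴ = (scalar n (star β) - A)ᴴ by simp, det_conjTranspose, star_eq_zero]

lemma re_neg_of_isRoot_charpoly_neg_inv_mul_conjTranspose_mul
    (hA : ∀ lam : ℂ, A.charpoly.IsRoot lam → 0 < lam.re) (hXinv : IsUnit X.det) {α : ℂ}
    (h : (-(X⁻¹ * Aᴴ * X)).charpoly.IsRoot α) : α.re < 0 := by
  rw [isRoot_charpoly_neg_iff, charpoly_mul_comm, ← Matrix.mul_assoc, mul_nonsing_inv _ hXinv,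
    Matrix.one_mul, isRoot_charpoly_conjTranspose_iff] at h
  simpa using hA _ h

lemma add_neg_inv_mul_conjTranspose_mul (hX : Aᴴ * X + X * A - Cᴴ * C = 0)
    (hXinv : IsUnit X.det) : A + -(X⁻¹ * Cᴴ) * C = -(X⁻¹ * Aᴴ * X) := by
  rw [Matrix.neg_mul, Matrix.mul_assoc, (sub_eq_zero.mp hX).symm, Matrix.mul_add,
    ← Matrix.mul_assoc X⁻¹ X, nonsing_inv_mul _ hXinv, Matrix.one_mul, Matrix.mul_assoc]
  abel

lemma mul_inv_add_inv_mul_conjTranspose (hX : Aᴴ * X + X * A - Cᴴ * C = 0)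
    (hXh : X.IsHermitian) (hXinv : IsUnit X.det) :
    A * X⁻¹ + X⁻¹ * Aᴴ = X⁻¹ * Cᴴ * (X⁻¹ * Cᴴ)ᴴ := by
  rw [conjTranspose_mul, conjTranspose_conjTranspose, hXh.inv, Matrix.mul_assoc,
    ← Matrix.mul_assoc Cᴴ, (sub_eq_zero.mp hX).symm, Matrix.add_mul, Matrix.mul_add,
    Matrix.mul_assoc Aᴴ, mul_nonsing_inv _ hXinv, Matrix.mul_assoc X, ← Matrix.mul_assoc X⁻¹ X,
    nonsing_inv_mul _ hXinv, Matrix.mul_one, Matrix.one_mul, add_comm]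

end complex

end Matrix

section toK

variable {I J L : Type}

lemma toK_mul [Fintype J] (A : Matrix I J ℂ) (B : Matrix J L ℂ) :
    toK (A * B) = toK A * toK B :=
  Matrix.map_mul

lemma toK_add (A B : Matrix I J ℂ) : toK (A + B) = toK A + toK B :=
  Matrix.map_add _ (map_add _) A B

lemma toK_neg (A : Matrix I J ℂ) : toK (-A) = -toK A :=
  Matrix.map_neg _ (map_neg _) A

lemma toK_zero : toK (0 : Matrix I J ℂ) = 0 :=
  Matrix.map_zero _ (map_zero _)

lemma toK_one [DecidableEq I] : toK (1 : Matrix I I ℂ) = 1 :=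
  Matrix.map_one _ (map_zero _) (map_one _)

lemma toK_fromCols (A₁ : Matrix I J ℂ) (A₂ : Matrix I L ℂ) :
    toK (fromCols A₁ A₂) = fromCols (toK A₁) (toK A₂) :=
  fromCols_map _ _ _

lemma toK_fromRows (A₁ : Matrix I J ℂ) (A₂ : Matrix L J ℂ) :
    toK (fromRows A₁ A₂) = fromRows (toK A₁) (toK A₂) :=
  fromRows_map _ _ _

lemma toK_eq_map_map (A : Matrix I J ℂ) :
    toK A = (A.map Polynomial.C).map (algebraMap ℂ[X] K) := by
  ext i j
  simp [toK, RatFunc.algebraMap_C]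

end toK

section sI

variable {I J : Type} [Fintype I] [DecidableEq I] [Fintype J] [DecidableEq J]

lemma sI_mul_comm (A : Matrix I J K) : sI I * A = A * sI J := by
  rw [sI, sI, Matrix.smul_mul, Matrix.mul_smul, Matrix.one_mul, Matrix.mul_one]

lemma sI_sub_toK_fromBlocks_zero₂₁ (A₁₁ : Matrix I I ℂ) (A₁₂ : Matrix I J ℂ)
    (A₂₂ : Matrix J J ℂ) :
    sI (I ⊕ J) - toK (fromBlocks A₁₁ A₁₂ 0 A₂₂) =
      fromBlocks (sI I - toK A₁₁) (-toK A₁₂) 0 (sI J - toK A₂₂) := by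
  ext (i | i) (j | j) <;> simp [sI, toK, one_apply]

end sI

section resolvent

variable {n : Type} [Fintype n] [DecidableEq n]

lemma sI_sub_toK_eq_map_charmatrix (A : Matrix n n ℂ) :
    sI n - toK A = (charmatrix A).map (algebraMap ℂ[X] K) := by
  ext i j
  by_cases h : i = j
  · subst h
    simp [sI, toK, charmatrix_apply_eq, RatFunc.algebraMap_C, RatFunc.algebraMap_X]
  · simp [sI, toK, h, RatFunc.algebraMap_C]

lemma det_sI_sub_toK (A : Matrix n n ℂ) :
    (sI n - toK A).det = algebraMap ℂ[X] K A.charpoly := by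
  rw [sI_sub_toK_eq_map_charmatrix, ← RingHom.mapMatrix_apply, ← RingHom.map_det, charpoly]

lemma algebraMap_charpoly_ne_zero (A : Matrix n n ℂ) : algebraMap ℂ[X] K A.charpoly ≠ 0 :=
  (map_ne_zero_iff _ (RatFunc.algebraMap_injective ℂ)).mpr A.charpoly_monic.ne_zero

lemma isUnit_det_sI_sub_toK (A : Matrix n n ℂ) : IsUnit (sI n - toK A).det := by
  rw [det_sI_sub_toK]
  exact (algebraMap_charpoly_ne_zero A).isUnit

lemma isUnit_sI_sub_toK (A : Matrix n n ℂ) : IsUnit (sI n - toK A) :=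
  (isUnit_iff_isUnit_det _).mpr (isUnit_det_sI_sub_toK A)

lemma inv_sI_sub_toK (A : Matrix n n ℂ) :
    (sI n - toK A)⁻¹ =
      (algebraMap ℂ[X] K A.charpoly)⁻¹ • (adjugate (charmatrix A)).map (algebraMap ℂ[X] K) := by
  rw [inv_def, det_sI_sub_toK, Ring.inverse_eq_inv, sI_sub_toK_eq_map_charmatrix,
    ← RingHom.mapMatrix_apply, ← RingHom.map_adjugate, RingHom.mapMatrix_apply]

end resolvent

section paraStar

variable (σ : K →+* K) {I J L : Type}

lemma paraStar_mul [Fintype J] (A : Matrix I J K) (B : Matrix J L K) :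
    paraStar σ (A * B) = paraStar σ B * paraStar σ A := by
  rw [paraStar, paraStar, paraStar, Matrix.map_mul, transpose_mul]

lemma paraStar_add (A B : Matrix I J K) : paraStar σ (A + B) = paraStar σ A + paraStar σ B := by
  rw [paraStar, paraStar, paraStar, Matrix.map_add _ (map_add σ), transpose_add]

lemma paraStar_sub (A B : Matrix I J K) : paraStar σ (A - B) = paraStar σ A - paraStar σ B := by
  rw [paraStar, paraStar, paraStar, Matrix.map_sub _ (map_sub σ), transpose_sub]

lemma paraStar_one [DecidableEq I] : paraStar σ (1 : Matrix I I K) = 1 := by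
  rw [paraStar, Matrix.map_one _ (map_zero σ) (map_one σ), transpose_one]

lemma paraStar_toK (hσC : ∀ c : ℂ, σ (RatFunc.C c) = RatFunc.C ((starRingEnd ℂ) c))
    (A : Matrix I J ℂ) : paraStar σ (toK A) = toK Aᴴ := by
  ext i j
  simp [paraStar, toK, conjTranspose_apply, hσC]

lemma paraStar_sI (hσX : σ RatFunc.X = -RatFunc.X) [Fintype I] [DecidableEq I] :
    paraStar σ (sI I) = -sI I := by
  rw [paraStar, sI, Matrix.map_smul' _ _ _ (map_mul σ), Matrix.map_one _ (map_zero σ) (map_one σ),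
    transpose_smul, transpose_one, hσX, neg_smul]

/-- With `B B⋆ = S Y + Y S⋆`, the cross term `C S⁻¹ B B⋆ S⋆⁻¹ C⋆` of the product splits into
`C Y S⋆⁻¹ C⋆ + C S⁻¹ Y C⋆`, which cancels the two linear terms once `C Y = -B⋆` and
`Y C⋆ = -B`. -/
lemma mul_inv_mul_add_one_mul_paraStar_eq_one {m n : Type} [Fintype m] [DecidableEq m]
    [Fintype n] [DecidableEq n] {S Y : Matrix n n K} {B : Matrix n m K} {C : Matrix m n K}
    (hS : IsUnit S.det) (hB : B * paraStar σ B = S * Y + Y * paraStar σ S)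
    (hCY : C * Y = -paraStar σ B) (hYC : Y * paraStar σ C = -B) :
    (C * S⁻¹ * B + 1) * paraStar σ (C * S⁻¹ * B + 1) = 1 := by
  have hSR : paraStar σ S * paraStar σ S⁻¹ = 1 := by
    rw [← paraStar_mul, nonsing_inv_mul _ hS, paraStar_one]
  have cross : C * S⁻¹ * (B * paraStar σ B) * paraStar σ S⁻¹ * paraStar σ C =
      -(paraStar σ B * paraStar σ S⁻¹ * paraStar σ C) - C * S⁻¹ * B :=
    calc C * S⁻¹ * (B * paraStar σ B) * paraStar σ S⁻¹ * paraStar σ C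
        = C * (S⁻¹ * S) * Y * paraStar σ S⁻¹ * paraStar σ C
          + C * S⁻¹ * (Y * (paraStar σ S * paraStar σ S⁻¹) * paraStar σ C) := by
          rw [hB]
          simp only [Matrix.mul_add, Matrix.add_mul, Matrix.mul_assoc]
      _ = C * Y * paraStar σ S⁻¹ * paraStar σ C + C * S⁻¹ * (Y * paraStar σ C) := by
          rw [nonsing_inv_mul _ hS, hSR, Matrix.mul_one, Matrix.mul_one]
      _ = _ := by
          rw [hCY, hYC]
          simp only [Matrix.neg_mul, Matrix.mul_neg, sub_eq_add_neg]
  rw [paraStar_add, paraStar_one, paraStar_mul, paraStar_mul]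
  calc (C * S⁻¹ * B + 1) * (paraStar σ B * (paraStar σ S⁻¹ * paraStar σ C) + 1)
      = 1 + C * S⁻¹ * B + paraStar σ B * paraStar σ S⁻¹ * paraStar σ C
        + C * S⁻¹ * (B * paraStar σ B) * paraStar σ S⁻¹ * paraStar σ C := by
        simp only [Matrix.add_mul, Matrix.mul_add, Matrix.one_mul, Matrix.mul_one,
          Matrix.mul_assoc]
        abel
    _ = 1 := by
        rw [cross]
        abel

end paraStar

def transferMatrix {n I J : Type} [Fintype n] [DecidableEq n] (A : Matrix n n ℂ)
    (B : Matrix n J ℂ) (C : Matrix I n ℂ) (D : Matrix I J ℂ) : Matrix I J K :=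
  toK C * (sI n - toK A)⁻¹ * toK B + toK D

section transferMatrix

variable {n I J : Type} [Fintype n] [DecidableEq n]

lemma toK_mul_transferMatrix {L : Type} [Fintype I] (P : Matrix L I ℂ) (A : Matrix n n ℂ)
    (B : Matrix n J ℂ) (C : Matrix I n ℂ) (D : Matrix I J ℂ) :
    toK P * transferMatrix A B C D = transferMatrix A B (P * C) (P * D) := by
  rw [transferMatrix, transferMatrix, Matrix.mul_add, toK_mul, toK_mul, Matrix.mul_assoc,
    Matrix.mul_assoc, Matrix.mul_assoc]

lemma exists_transferMatrix_apply_eq_div (A : Matrix n n ℂ) (B : Matrix n J ℂ)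
    (C : Matrix I n ℂ) (D : Matrix I J ℂ) (i : I) (j : J) :
    ∃ r : ℂ[X], transferMatrix A B C D i j =
      algebraMap ℂ[X] K r / algebraMap ℂ[X] K A.charpoly := by
  have hχ := algebraMap_charpoly_ne_zero A
  have key : algebraMap ℂ[X] K A.charpoly • transferMatrix A B C D =
      (C.map Polynomial.C * adjugate (charmatrix A) * B.map Polynomial.C +
        A.charpoly • D.map Polynomial.C).map (algebraMap ℂ[X] K) := by
    rw [Matrix.map_add _ (map_add _), Matrix.map_mul, Matrix.map_mul,
      Matrix.map_smulₛₗ _ (algebraMap ℂ[X] K) _ (map_mul (algebraMap ℂ[X] K) _), transferMatrix,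
      inv_sI_sub_toK, toK_eq_map_map C, toK_eq_map_map B, toK_eq_map_map D, Matrix.mul_smul,
      Matrix.smul_mul, smul_add, smul_smul, mul_inv_cancel₀ hχ, one_smul]
  refine ⟨(C.map Polynomial.C * adjugate (charmatrix A) * B.map Polynomial.C +
    A.charpoly • D.map Polynomial.C) i j, ?_⟩
  rw [eq_div_iff hχ, mul_comm, ← smul_eq_mul, ← Matrix.smul_apply, key, Matrix.map_apply]

lemma isRoot_charpoly_of_mIsPole_transferMatrix {A : Matrix n n ℂ} {B : Matrix n J ℂ}
    {C : Matrix I n ℂ} {D : Matrix I J ℂ} {α : ℂ} (h : MIsPole α (transferMatrix A B C D)) :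
    A.charpoly.IsRoot α := by
  obtain ⟨i, j, hij⟩ := h
  obtain ⟨r, hr⟩ := exists_transferMatrix_apply_eq_div A B C D i j
  obtain ⟨e, he⟩ := (RatFunc.denom_dvd A.charpoly_monic.ne_zero).mpr ⟨r, hr⟩
  rw [IsRoot, he, eval_mul, hij, zero_mul]

/-- `A Y + Y Aᴴ = B Bᴴ` together with `Y Cᴴ = -B` gives the closed-loop Lyapunov equation
`(A + B C) Y + Y (A + B C)ᴴ + B Bᴴ = 0`. -/
lemma transferMatrix_mul_paraStar_eq_one (σ : K →+* K)
    (hσC : ∀ c : ℂ, σ (RatFunc.C c) = RatFunc.C ((starRingEnd ℂ) c))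
    (hσX : σ RatFunc.X = -RatFunc.X) [Fintype I] [DecidableEq I] {A Y : Matrix n n ℂ}
    {B : Matrix n I ℂ} {C : Matrix I n ℂ} (hY : Y.IsHermitian)
    (hLyap : A * Y + Y * Aᴴ = B * Bᴴ) (hYC : Y * Cᴴ = -B) :
    transferMatrix (A + B * C) B C 1 * paraStar σ (transferMatrix (A + B * C) B C 1) = 1 := by
  have hCY : C * Y = -Bᴴ := by
    simpa [conjTranspose_mul, hY.eq] using congrArg conjTranspose hYC
  have hClosed : B * Bᴴ = -((A + B * C) * Y + Y * (A + B * C)ᴴ) := by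
    rw [conjTranspose_add, conjTranspose_mul, Matrix.add_mul, Matrix.mul_add, Matrix.mul_assoc B,
      hCY, ← Matrix.mul_assoc Y, hYC, eq_sub_of_add_eq hLyap]
    simp only [Matrix.mul_neg, Matrix.neg_mul]
    abel
  rw [transferMatrix, toK_one]
  apply mul_inv_mul_add_one_mul_paraStar_eq_one σ (Y := toK Y) (isUnit_det_sI_sub_toK _)
  · rw [paraStar_toK σ hσC, paraStar_sub, paraStar_sI σ hσX, paraStar_toK σ hσC, ← toK_mul,
      hClosed, toK_neg, toK_add, toK_mul, toK_mul, Matrix.sub_mul, Matrix.mul_sub, sI_mul_comm,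
      Matrix.mul_neg]
    abel
  · rw [paraStar_toK σ hσC, ← toK_mul, hCY, toK_neg]
  · rw [paraStar_toK σ hσC, ← toK_mul, hYC, toK_neg]

lemma transferMatrix_add_mul_mul_transferMatrix [Fintype I] [DecidableEq I] (A : Matrix n n ℂ)
    (E : Matrix n I ℂ) (B : Matrix n J ℂ) (C : Matrix I n ℂ) (D : Matrix I J ℂ) :
    transferMatrix (A + E * C) E C 1 * transferMatrix A B C D =
      transferMatrix (A + E * C) (B + E * D) C D := by
  have hS : sI n - toK (A + E * C) = sI n - toK A - toK E * toK C := by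
    rw [toK_add, toK_mul, sub_add_eq_sub_sub]
  rw [transferMatrix, transferMatrix, transferMatrix, hS, toK_one, toK_add, toK_mul,
    mul_inv_sub_mul_mul_add_one_mul _ _ _ _ (isUnit_det_sI_sub_toK A)
      (hS ▸ isUnit_det_sI_sub_toK _)]

end transferMatrix

lemma transferMatrix_fromBlocks_fromRows_zero {I J L : Type} [Fintype I] [DecidableEq I]
    [Fintype J] [DecidableEq J] [DecidableEq L] (A₁₁ : Matrix I I ℂ) (A₁₂ : Matrix I J ℂ)
    (A₂₂ : Matrix J J ℂ) (M : Matrix I L ℂ) (C₁ : Matrix L I ℂ) (C₂ : Matrix L J ℂ) :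
    transferMatrix (fromBlocks A₁₁ A₁₂ 0 A₂₂) (fromRows M 0) (fromCols C₁ C₂) 1 =
      transferMatrix A₁₁ M C₁ 1 := by
  rw [transferMatrix, transferMatrix, sI_sub_toK_fromBlocks_zero₂₁, toK_fromCols, toK_fromRows,
    toK_zero, fromCols_mul_inv_fromBlocks_zero₂₁_mul_fromRows_zero _ _ _ _ _ _
      (iff_of_true (isUnit_sI_sub_toK A₁₁) (isUnit_sI_sub_toK A₂₂))]

lemma transferMatrix_add_mul_mul_transferMatrix_fromBlocks {I J L N : Type} [Fintype I]
    [DecidableEq I] [Fintype J] [DecidableEq J] [Fintype L] [DecidableEq L] (A₁₁ : Matrix I I ℂ)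
    (A₁₂ : Matrix I J ℂ) (A₂₂ : Matrix J J ℂ) (M : Matrix I L ℂ) (B₁ : Matrix I N ℂ)
    (B₂ : Matrix J N ℂ) (C₁ : Matrix L I ℂ) (C₂ : Matrix L J ℂ) (D : Matrix L N ℂ) :
    transferMatrix (A₁₁ + M * C₁) M C₁ 1 *
        transferMatrix (fromBlocks A₁₁ A₁₂ 0 A₂₂) (fromRows B₁ B₂) (fromCols C₁ C₂) D =
      transferMatrix (fromBlocks (A₁₁ + M * C₁) (A₁₂ + M * C₂) 0 A₂₂) (fromRows (B₁ + M * D) B₂)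
        (fromCols C₁ C₂) D := by
  have hA : fromBlocks (A₁₁ + M * C₁) (A₁₂ + M * C₂) 0 A₂₂ =
      fromBlocks A₁₁ A₁₂ 0 A₂₂ + fromRows M 0 * fromCols C₁ C₂ := by
    simp [fromBlocks_add]
  have hB : fromRows (B₁ + M * D) B₂ = fromRows B₁ B₂ + fromRows M 0 * D := by
    ext (i | i) j <;> simp [fromRows_mul]
  rw [← transferMatrix_fromBlocks_fromRows_zero _ (A₁₂ + M * C₂) A₂₂ M C₁ C₂, hA, hB,
    transferMatrix_add_mul_mul_transferMatrix]

theorem continuous_coprime_factorization_inner_denominator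
    (nu ns p q : ℕ)
    (σc : K →+* K)
    (hσcC : ∀ c : ℂ, σc (RatFunc.C c) = RatFunc.C ((starRingEnd ℂ) c))
    (hσcX : σc RatFunc.X = -RatFunc.X)
    (Au : Matrix (Fin nu) (Fin nu) ℂ) (Aus : Matrix (Fin nu) (Fin ns) ℂ)
    (As : Matrix (Fin ns) (Fin ns) ℂ)
    (Bu : Matrix (Fin nu) (Fin p) ℂ) (Bs : Matrix (Fin ns) (Fin p) ℂ)
    (Cu : Matrix (Fin q) (Fin nu) ℂ) (Cs : Matrix (Fin q) (Fin ns) ℂ)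
    (D : Matrix (Fin q) (Fin p) ℂ)
    (hAu : ∀ lam : ℂ, Au.charpoly.IsRoot lam → 0 < lam.re)
    (hAs : ∀ lam : ℂ, As.charpoly.IsRoot lam → lam.re ≤ 0)
    (T : Matrix (Fin q) (Fin p) K)
    (hT : T = toK (Matrix.fromCols Cu Cs) *
        (sI (Fin nu ⊕ Fin ns) - toK (Matrix.fromBlocks Au Aus 0 As))⁻¹ *
        toK (Matrix.fromRows Bu Bs) + toK D)
    (X : Matrix (Fin nu) (Fin nu) ℂ)
    (hX : Auᴴ * X + X * Au - Cuᴴ * Cu = 0)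
    (hXherm : X.IsHermitian)
    (hXinv : IsUnit X.det)
    (M : Matrix (Fin nu) (Fin q) ℂ)
    (hM : M = -(X⁻¹ * Cuᴴ))
    (P : Matrix (Fin q) (Fin q) ℂ)
    (hP : Pᴴ * P = 1 ∧ P * Pᴴ = 1)
    (TD : Matrix (Fin q) (Fin q) K)
    (hTD : TD = toK P * toK Cu *
        (sI (Fin nu) - toK Au - toK (M * Cu))⁻¹ * toK M + toK P)
    (TN : Matrix (Fin q) (Fin p) K)
    (hTN : TN = toK P * toK (Matrix.fromCols Cu Cs) *
        (sI (Fin nu ⊕ Fin ns) -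
          toK (Matrix.fromBlocks (Au + M * Cu) (Aus + M * Cs) 0 As))⁻¹ *
        toK (Matrix.fromRows (Bu + M * D) Bs)
        + toK P * toK D) :
    TD * paraStar σc TD = 1 ∧
    (∀ α : ℂ, MIsPole α TD → α.re < 0) ∧
    (∀ α : ℂ, MIsPole α TN → α.re ≤ 0) ∧
    TD * T = TN := by
  set F := Au + M * Cu with hF
  have hFstable : ∀ α : ℂ, F.charpoly.IsRoot α → α.re < 0 := fun α h =>
    re_neg_of_isRoot_charpoly_neg_inv_mul_conjTranspose_mul hAu hXinv
      (by rwa [hF, hM, add_neg_inv_mul_conjTranspose_mul hX hXinv] at h)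
  have hT' : T = transferMatrix (fromBlocks Au Aus 0 As) (fromRows Bu Bs) (fromCols Cu Cs) D := hT
  have hTD' : TD = toK P * transferMatrix F M Cu 1 := by
    rw [hTD, toK_mul_transferMatrix, transferMatrix, sub_sub, ← toK_add, toK_mul, Matrix.mul_one]
  have hTN' : TN = toK P * transferMatrix (fromBlocks F (Aus + M * Cs) 0 As)
      (fromRows (Bu + M * D) Bs) (fromCols Cu Cs) D := by
    rw [hTN, toK_mul_transferMatrix, transferMatrix, toK_mul, toK_mul]
  refine ⟨?inner, fun α hα => hFstable α ?polesTD, fun α hα => ?polesTN, ?factorization⟩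
  case inner =>
    have hLyap : Au * X⁻¹ + X⁻¹ * Auᴴ = M * Mᴴ := by
      rw [mul_inv_add_inv_mul_conjTranspose hX hXherm hXinv, hM, conjTranspose_neg,
        Matrix.neg_mul, Matrix.mul_neg, neg_neg]
    rw [hTD', paraStar_mul, paraStar_toK σc hσcC, Matrix.mul_assoc,
      ← Matrix.mul_assoc (transferMatrix _ _ _ _), transferMatrix_mul_paraStar_eq_one σc hσcC hσcX
        hXherm.inv hLyap (by rw [hM, neg_neg]), Matrix.one_mul, ← toK_mul, hP.2, toK_one]
  case polesTD =>
    rw [hTD', toK_mul_transferMatrix] at hα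
    exact isRoot_charpoly_of_mIsPole_transferMatrix hα
  case polesTN =>
    rw [hTN', toK_mul_transferMatrix] at hα
    have h := isRoot_charpoly_of_mIsPole_transferMatrix hα
    rw [charpoly_fromBlocks_zero₂₁, root_mul] at h
    exact h.elim (fun hF => (hFstable α hF).le) (hAs α)
  case factorization =>
    rw [hTD', hT', hTN', Matrix.mul_assoc, transferMatrix_add_mul_mul_transferMatrix_fromBlocks]
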